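/- Let H be a group that is δ-hyperbolic with respect to a finite generating set S. If c is a real number and u, v, w ∈ H satisfy uvw = u ·_c v ·_c w and |v| > 2c + δ, then |uvw| > |u| + |v| + |w| − (4c + 2δ). -/
import Mathlib


variable {G : Type*} [Group G]

/-- Word length of `g` with respect to a generating set `S`: the least number of
letters from `S ∪ S⁻¹` whose product is `g`. -/
noncomputable def wlen (S : Set G) (g : G) : ℕ :=
  sInf {n : ℕ | ∃ L : List G, (∀ x ∈ L, x ∈ S ∨ x⁻¹ ∈ S) ∧ L.length = n ∧ L.prod = g}

/-- A discrete geodesic from `a` to `b` in the Cayley graph of `G` w.r.t. `S`: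
the sequence of vertices visited by a geodesic path. -/
def IsDGeodesic (S : Set G) (a b : G) (p : ℕ → G) : Prop :=
  p 0 = a ∧ p (wlen S (a⁻¹ * b)) = b ∧
    ∀ i ≤ wlen S (a⁻¹ * b), ∀ j ≤ wlen S (a⁻¹ * b),
      wlen S ((p i)⁻¹ * p j) = Nat.dist i j

/-- `G` is `δ`-hyperbolic with respect to `S`: every geodesic triangle in the
Cayley graph `Γ(G,S)` is `δ`-thin, rendered on the vertex set. -/
def GroupHyperbolic (S : Set G) (δ : ℝ) : Prop :=
  ∀ a b c : G, ∀ p q : ℕ → G, IsDGeodesic S a b p → IsDGeodesic S a c q →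
    ∀ i : ℕ,
      (i : ℝ) ≤ ((wlen S (a⁻¹ * b) : ℝ) + (wlen S (a⁻¹ * c) : ℝ)
          - (wlen S (b⁻¹ * c) : ℝ)) / 2 →
      (wlen S ((p i)⁻¹ * q i) : ℝ) ≤ δ

/-- The small-cancellation notation `u ·_c v`: the product `u * v` cancels less
than `c`, i.e. `(|u| + |v| - |uv|)/2 < c`. -/
def CDot (S : Set G) (c : ℝ) (u v : G) : Prop :=
  ((wlen S u : ℝ) + (wlen S v : ℝ) - (wlen S (u * v) : ℝ)) / 2 < c

section Aux

variable {S : Set G}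

lemma exists_rep (hgen : Subgroup.closure S = ⊤) (g : G) :
    ∃ L : List G, (∀ x ∈ L, x ∈ S ∨ x⁻¹ ∈ S) ∧ L.prod = g := by
  let K : Subgroup G :=
    { carrier := {g : G | ∃ L : List G, (∀ x ∈ L, x ∈ S ∨ x⁻¹ ∈ S) ∧ L.prod = g}
      one_mem' := ⟨[], by simp, by simp⟩
      mul_mem' := by
        rintro x y ⟨L1, h1, e1⟩ ⟨L2, h2, e2⟩
        refine ⟨L1 ++ L2, ?_, by simp [e1, e2]⟩
        intro z hz
        rcases List.mem_append.1 hz with h | h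
        exacts [h1 z h, h2 z h]
      inv_mem' := by
        rintro x ⟨L, h, e⟩
        refine ⟨(L.map (fun y => y⁻¹)).reverse, ?_, ?_⟩
        · intro z hz
          rw [List.mem_reverse, List.mem_map] at hz
          obtain ⟨y, hy, rfl⟩ := hz
          rcases h y hy with h' | h'
          · exact Or.inr (by simpa using h')
          · exact Or.inl h'
        · rw [← List.prod_inv_reverse, e] }
  have hK : Subgroup.closure S ≤ K := (Subgroup.closure_le K).mpr
    (fun x hx => ⟨[x], by intro z hz; simp at hz; subst hz; exact Or.inl hx, by simp⟩)
  rw [hgen] at hK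
  exact hK (Subgroup.mem_top g)

lemma wlen_spec (hgen : Subgroup.closure S = ⊤) (g : G) :
    ∃ L : List G, (∀ x ∈ L, x ∈ S ∨ x⁻¹ ∈ S) ∧ L.length = wlen S g ∧ L.prod = g := by
  have hne : {n : ℕ | ∃ L : List G, (∀ x ∈ L, x ∈ S ∨ x⁻¹ ∈ S) ∧ L.length = n ∧ L.prod = g}.Nonempty := by
    obtain ⟨L, h1, h2⟩ := exists_rep hgen g
    exact ⟨L.length, L, h1, rfl, h2⟩
  exact Nat.sInf_mem hne

lemma wlen_le (L : List G) (hL : ∀ x ∈ L, x ∈ S ∨ x⁻¹ ∈ S) :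
    wlen S L.prod ≤ L.length :=
  Nat.sInf_le ⟨L, hL, rfl, rfl⟩

lemma wlen_mul_le (hgen : Subgroup.closure S = ⊤) (g h : G) :
    wlen S (g * h) ≤ wlen S g + wlen S h := by
  obtain ⟨L1, p1, l1, e1⟩ := wlen_spec hgen g
  obtain ⟨L2, p2, l2, e2⟩ := wlen_spec hgen h
  have := wlen_le (S := S) (L1 ++ L2) (by
    intro z hz
    rcases List.mem_append.1 hz with hh | hh
    exacts [p1 z hh, p2 z hh])
  simpa [e1, e2, l1, l2] using this

lemma wlen_inv_le (hgen : Subgroup.closure S = ⊤) (g : G) :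
    wlen S g⁻¹ ≤ wlen S g := by
  obtain ⟨L, p, l, e⟩ := wlen_spec hgen g
  have hpred : ∀ z ∈ (L.map (fun y => y⁻¹)).reverse, z ∈ S ∨ z⁻¹ ∈ S := by
    intro z hz
    rw [List.mem_reverse, List.mem_map] at hz
    obtain ⟨y, hy, rfl⟩ := hz
    rcases p y hy with h' | h'
    · exact Or.inr (by simpa using h')
    · exact Or.inl h'
  have := wlen_le (S := S) ((L.map (fun y => y⁻¹)).reverse) hpred
  rw [← List.prod_inv_reverse, e] at this
  simpa [l] using this

lemma wlen_inv (hgen : Subgroup.closure S = ⊤) (g : G) :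
    wlen S g⁻¹ = wlen S g :=
  le_antisymm (wlen_inv_le hgen g) (by simpa using wlen_inv_le hgen g⁻¹)

lemma exists_geodesic (hgen : Subgroup.closure S = ⊤) (a b : G) :
    ∃ p : ℕ → G, IsDGeodesic S a b p := by
  obtain ⟨L, hL, hlen, hprod⟩ := wlen_spec hgen (a⁻¹ * b)
  refine ⟨fun i => a * (L.take i).prod, by simp, ?_, ?_⟩
  · simp only []
    rw [List.take_of_length_le (le_of_eq hlen), hprod, mul_inv_cancel_left]
  · have key : ∀ i j : ℕ, i ≤ j → j ≤ wlen S (a⁻¹ * b) →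
        wlen S ((a * (L.take i).prod)⁻¹ * (a * (L.take j).prod)) = j - i := by
      intro i j hij hjn
      have hjl : j ≤ L.length := by omega
      set mid := (L.drop i).take (j - i) with hmid
      have hsplit : L.take j = L.take i ++ mid := by
        rw [show j = i + (j - i) by omega, List.take_add]
      have hval : (a * (L.take i).prod)⁻¹ * (a * (L.take j).prod) = mid.prod := by
        rw [hsplit, List.prod_append]
        group
      rw [hval]
      have hmidlen : mid.length = j - i := by
        rw [hmid, List.length_take, List.length_drop]
        omega
      have hmidpred : ∀ z ∈ mid, z ∈ S ∨ z⁻¹ ∈ S := fun z hz =>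
        hL z (((List.take_sublist _ _).trans (List.drop_sublist _ _)).mem hz)
      have hub : wlen S mid.prod ≤ j - i := by
        have := wlen_le mid hmidpred
        omega
      have hlb : j - i ≤ wlen S mid.prod := by
        have eL : (L.take i).prod * (L.drop i).prod = a⁻¹ * b := by
          rw [← List.prod_append, List.take_append_drop, hprod]
        have eDD : (L.drop i).drop (j - i) = L.drop j := by
          rw [List.drop_drop]
          congr 1
          omega
        have eD : mid.prod * (L.drop j).prod = (L.drop i).prod := by
          rw [← eDD, ← List.prod_append, hmid, List.take_append_drop]
        have h1 : wlen S (a⁻¹ * b) ≤ wlen S (L.take i).prod + wlen S (L.drop i).prod := by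
          have := wlen_mul_le hgen (L.take i).prod (L.drop i).prod
          rwa [eL] at this
        have h2 : wlen S (L.drop i).prod ≤ wlen S mid.prod + wlen S (L.drop j).prod := by
          have := wlen_mul_le hgen mid.prod (L.drop j).prod
          rwa [eD] at this
        have h3 : wlen S (L.take i).prod ≤ i := by
          have := wlen_le (L.take i) (fun z hz => hL z ((List.take_sublist _ _).mem hz))
          have hl : (L.take i).length ≤ i := by
            rw [List.length_take]; omega
          omega
        have h4 : wlen S (L.drop j).prod ≤ L.length - j := by
          have := wlen_le (L.drop j) (fun z hz => hL z ((List.drop_sublist _ _).mem hz))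
          rw [List.length_drop] at this
          omega
        omega
      omega
    intro i hi j hj
    rcases le_total i j with h | h
    · rw [Nat.dist_eq_sub_of_le h]
      exact key i j h hj
    · rw [Nat.dist_comm, Nat.dist_eq_sub_of_le h]
      rw [← key j i h hi, ← wlen_inv hgen]
      congr 1
      group

end Aux

section ChainLemma

variable {G : Type*} [Group G] {S : Set G}

lemma gl_chain {δ : ℝ} (hgen : Subgroup.closure S = ⊤) (hδ : 0 ≤ δ)
    (hhyp : GroupHyperbolic S δ) (A B1 B2 B3 : G) (i : ℕ)
    (h12 : wlen S (B1⁻¹ * B2) + 2 * i ≤ wlen S (A⁻¹ * B1) + wlen S (A⁻¹ * B2))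
    (h23 : wlen S (B2⁻¹ * B3) + 2 * i ≤ wlen S (A⁻¹ * B2) + wlen S (A⁻¹ * B3)) :
    wlen S (B1⁻¹ * B3) + 2 * i ≤ wlen S (A⁻¹ * B1) + wlen S (A⁻¹ * B3) + 2 * ⌊δ⌋₊ := by
  obtain ⟨p1, g1⟩ := exists_geodesic hgen A B1
  obtain ⟨p2, g2⟩ := exists_geodesic hgen A B2
  obtain ⟨p3, g3⟩ := exists_geodesic hgen A B3
  set n1 := wlen S (A⁻¹ * B1) with hn1
  set n2 := wlen S (A⁻¹ * B2) with hn2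
  set n3 := wlen S (A⁻¹ * B3) with hn3
  -- triangle facts to get i ≤ n1, i ≤ n3
  have tri1 : n2 ≤ n1 + wlen S (B1⁻¹ * B2) := by
    have := wlen_mul_le hgen (A⁻¹ * B1) (B1⁻¹ * B2)
    rwa [show A⁻¹ * B1 * (B1⁻¹ * B2) = A⁻¹ * B2 by group] at this
  have tri3 : n2 ≤ n3 + wlen S (B2⁻¹ * B3) := by
    have := wlen_mul_le hgen (A⁻¹ * B3) (B3⁻¹ * B2)
    rw [show A⁻¹ * B3 * (B3⁻¹ * B2) = A⁻¹ * B2 by group] at this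
    rwa [show B3⁻¹ * B2 = (B2⁻¹ * B3)⁻¹ by group, wlen_inv hgen] at this
  have hin1 : i ≤ n1 := by omega
  have hin3 : i ≤ n3 := by omega
  -- thinness
  have d12 : wlen S ((p1 i)⁻¹ * p2 i) ≤ ⌊δ⌋₊ := by
    refine Nat.le_floor (hhyp A B1 B2 p1 p2 g1 g2 i ?_)
    have : (wlen S (B1⁻¹ * B2) : ℝ) + 2 * i ≤ (n1 : ℝ) + (n2 : ℝ) := by exact_mod_cast h12
    rw [← hn1, ← hn2]
    linarith
  have d23 : wlen S ((p2 i)⁻¹ * p3 i) ≤ ⌊δ⌋₊ := by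
    refine Nat.le_floor (hhyp A B2 B3 p2 p3 g2 g3 i ?_)
    have : (wlen S (B2⁻¹ * B3) : ℝ) + 2 * i ≤ (n2 : ℝ) + (n3 : ℝ) := by exact_mod_cast h23
    rw [← hn2, ← hn3]
    linarith
  -- endpoint distances
  have e1 : wlen S ((p1 i)⁻¹ * B1) = n1 - i := by
    have := g1.2.2 i hin1 n1 le_rfl
    rw [g1.2.1, Nat.dist_eq_sub_of_le hin1] at this
    exact this
  have e3 : wlen S ((p3 i)⁻¹ * B3) = n3 - i := by
    have := g3.2.2 i hin3 n3 le_rfl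
    rw [g3.2.1, Nat.dist_eq_sub_of_le hin3] at this
    exact this
  -- chain
  have c1 : wlen S (B1⁻¹ * B3) ≤ wlen S (B1⁻¹ * p1 i) + wlen S ((p1 i)⁻¹ * B3) := by
    have := wlen_mul_le hgen (B1⁻¹ * p1 i) ((p1 i)⁻¹ * B3)
    rwa [show B1⁻¹ * p1 i * ((p1 i)⁻¹ * B3) = B1⁻¹ * B3 by group] at this
  have c2 : wlen S ((p1 i)⁻¹ * B3) ≤ wlen S ((p1 i)⁻¹ * p2 i) + wlen S ((p2 i)⁻¹ * B3) := by
    have := wlen_mul_le hgen ((p1 i)⁻¹ * p2 i) ((p2 i)⁻¹ * B3)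
    rwa [show (p1 i)⁻¹ * p2 i * ((p2 i)⁻¹ * B3) = (p1 i)⁻¹ * B3 by group] at this
  have c3 : wlen S ((p2 i)⁻¹ * B3) ≤ wlen S ((p2 i)⁻¹ * p3 i) + wlen S ((p3 i)⁻¹ * B3) := by
    have := wlen_mul_le hgen ((p2 i)⁻¹ * p3 i) ((p3 i)⁻¹ * B3)
    rwa [show (p2 i)⁻¹ * p3 i * ((p3 i)⁻¹ * B3) = (p2 i)⁻¹ * B3 by group] at this
  have e1' : wlen S (B1⁻¹ * p1 i) = n1 - i := by
    rw [show B1⁻¹ * p1 i = ((p1 i)⁻¹ * B1)⁻¹ by group, wlen_inv hgen, e1]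
  omega

end ChainLemma

/-- (Lemma 2.19 of the paper.)  If `uvw = u ·_c v ·_c w` and
`|v| > 2c + δ`, then `|uvw| > |u| + |v| + |w| - (4c + 2δ)`. -/
theorem stmt10 (H : Type*) [Group H] (S : Set H) (δ : ℝ)
    (hfin : S.Finite) (hgen : Subgroup.closure S = ⊤) (hδ : 0 ≤ δ)
    (hhyp : GroupHyperbolic S δ)
    (c : ℝ) (u v w : H)
    (huv : CDot S c u v) (hvw : CDot S c v w)
    (hv : (wlen S v : ℝ) > 2 * c + δ) :
    (wlen S (u * v * w) : ℝ) >
      (wlen S u : ℝ) + (wlen S v : ℝ) + (wlen S w : ℝ) - (4 * c + 2 * δ) := by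
  have huv' : ((wlen S u : ℝ) + (wlen S v : ℝ) - (wlen S (u * v) : ℝ)) / 2 < c := huv
  have hvw' : ((wlen S v : ℝ) + (wlen S w : ℝ) - (wlen S (v * w) : ℝ)) / 2 < c := hvw
  by_contra hcon
  push_neg at hcon
  set Du := wlen S u with hDu
  set Dv := wlen S v with hDv
  set Dw := wlen S w with hDw
  set Duv := wlen S (u * v) with hDuv
  set Dvw := wlen S (v * w) with hDvw
  set Duvw := wlen S (u * v * w) with hDuvw
  set D := ⌊δ⌋₊ with hD
  have hDle : (D : ℝ) ≤ δ := Nat.floor_le hδ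
  have WI : ∀ g : H, wlen S g⁻¹ = wlen S g := wlen_inv hgen
  -- rewriting helpers
  have w1 : wlen S ((u*v)⁻¹ * u) = Dv := by
    rw [show (u*v)⁻¹ * u = v⁻¹ by group, WI, hDv]
  have w2 : wlen S ((u*v)⁻¹ * 1) = Duv := by
    rw [mul_one, WI, hDuv]
  have w3 : wlen S ((u*v)⁻¹ * (u*v*w)) = Dw := by
    rw [show (u*v)⁻¹ * (u*v*w) = w by group, hDw]
  have w4 : wlen S (u⁻¹ * 1) = Du := by
    rw [mul_one, WI, hDu]
  have w5 : wlen S ((1:H)⁻¹ * (u*v*w)) = Duvw := by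
    rw [show ((1:H))⁻¹ * (u*v*w) = u*v*w by group, hDuvw]
  have w6 : wlen S (u⁻¹ * (u*v*w)) = Dvw := by
    rw [show u⁻¹ * (u*v*w) = v*w by group, hDvw]
  have w7 : wlen S ((u*v*w)⁻¹ * (u*v)) = Dw := by
    rw [show (u*v*w)⁻¹ * (u*v) = w⁻¹ by group, WI, hDw]
  have w8 : wlen S (u⁻¹ * (u*v)) = Dv := by
    rw [show u⁻¹ * (u*v) = v by group, hDv]
  have w9 : wlen S ((1:H)⁻¹ * (u*v)) = Duv := by
    rw [show ((1:H))⁻¹ * (u*v) = u*v by group, hDuv]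
  have w10 : wlen S ((1:H)⁻¹ * u) = Du := by
    rw [show ((1:H))⁻¹ * u = u by group, hDu]
  -- the three thinness facts
  have F1 : ∀ i : ℕ, Du + 2*i ≤ Dv + Duv → Duvw + 2*i ≤ Duv + Dw →
      Dvw + 2*i ≤ Dv + Dw + 2*D := by
    intro i h1 h2
    have := gl_chain hgen hδ hhyp (u*v) u 1 (u*v*w) i
      (by rw [w4, w1, w2]; exact h1) (by rw [w5, w2, w3]; exact h2)
    rwa [w6, w1, w3] at this
  have F2 : ∀ i : ℕ, Duvw + 2*i ≤ Du + Dvw → Dw + 2*i ≤ Dvw + Dv →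
      Duv + 2*i ≤ Du + Dv + 2*D := by
    intro i h1 h2
    have := gl_chain hgen hδ hhyp u 1 (u*v*w) (u*v) i
      (by rw [w5, w4, w6]; exact h1) (by rw [w7, w6, w8]; exact h2)
    rwa [w9, w4, w8] at this
  have F3 : ∀ i : ℕ, Dv + 2*i ≤ Du + Duv → Dw + 2*i ≤ Duv + Duvw →
      Dvw + 2*i ≤ Du + Duvw + 2*D := by
    intro i h1 h2
    have := gl_chain hgen hδ hhyp 1 u (u*v) (u*v*w) i
      (by rw [w8, w10, w9]; exact h1) (by rw [w3, w9, w5]; exact h2)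
    rwa [w6, w10, w5] at this
  -- triangle inequalities
  have t1 : Dv ≤ Du + Duv := by
    have h := wlen_mul_le hgen u⁻¹ (u*v)
    rw [show u⁻¹ * (u*v) = v by group, WI] at h
    exact h
  have t2 : Dvw ≤ Dv + Dw := wlen_mul_le hgen v w
  have t3 : Duvw ≤ Duv + Dw := wlen_mul_le hgen (u*v) w
  have t4 : Duv ≤ Du + Dv := wlen_mul_le hgen u v
  -- the two numerical facts
  have N1 : Dv + Duvw + 2*D + 1 ≤ Duv + Dvw := by
    have h : (Dv : ℝ) + Duvw + 2*D < Duv + Dvw := by linarith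
    have h' : Dv + Duvw + 2*D < Duv + Dvw := by exact_mod_cast h
    omega
  have N2 : Du + Dw + 2*D + 1 ≤ Duv + Dvw := by
    have h : (Du : ℝ) + Dw + 2*D < Duv + Dvw := by linarith
    have h' : Du + Dw + 2*D < Duv + Dvw := by exact_mod_cast h
    omega
  -- case analysis
  rcases Nat.even_or_odd (Dv + Dw - Dvw) with ⟨kB, hkB⟩ | ⟨kB, hkB⟩
  · rcases Nat.even_or_odd (Du + Dv - Duv) with ⟨kA, hkA⟩ | ⟨kA, hkA⟩
    · -- A, B both even
      by_cases hT : Duvw + (Dv + Dw - Dvw) + 2*D + 2 ≤ Duv + Dw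
      · have := F1 (kB + D + 1) (by omega) (by omega)
        omega
      · have := F3 (Du - kA) (by omega) (by omega)
        omega
    · -- A odd
      have := F2 (kA + D + 1) (by omega) (by omega)
      omega
  · -- B odd
    have := F1 (kB + D + 1) (by omega) (by omega)
    omega
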